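/- For an LFSA S, the following are equivalent: (i) for every state (q,x) reachable in CC(S_ε, S_dss_obs^ε), if q ∈ Q_S then x ≠ ∅ and all states reachable from (q,x) have nonempty right component; (ii) every state (q'',x'') reachable in CC(S_ε, S_dss_obs^ε) satisfies x'' ≠ ∅. Consequently, S is strongly infinite-step opaque with respect to Q_S if and only if every reachable state of CC(S_ε, S_dss_obs^ε) has nonempty right component. -/

import Mathlib

/-- A labeled finite-state automaton (LFSA): transition relation `δ`,
initial states `Q0`, labeling `lab` (where `none` stands for ε, i.e. unobservable). -/
structure LFSA (Q : Type*) (E : Type*) (A : Type*) where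
  δ : Q → E → Q → Prop
  Q0 : Set Q
  lab : E → Option A

namespace LFSA

variable {Q Q1 Q2 E A : Type*}

/-- A run `q →s q'` over a finite event sequence. -/
inductive Run (S : LFSA Q E A) : Q → List E → Q → Prop
  | nil (q : Q) : Run S q [] q
  | cons {q q' q'' : Q} {e : E} {s : List E} :
      S.δ q e q' → Run S q' s q'' → Run S q (e :: s) q''

/-- Output (label sequence) of an event sequence. -/
def out (S : LFSA Q E A) (s : List E) : List A := s.filterMap S.lab

/-- Generated finite language. -/
def L (S : LFSA Q E A) : Set (List E) := {s | ∃ q0 ∈ S.Q0, ∃ q, S.Run q0 s q}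

/-- Current-state estimate after observing `σ`. -/
def M (S : LFSA Q E A) (σ : List A) : Set Q :=
  {q | ∃ q0 ∈ S.Q0, ∃ s : List E, S.out s = σ ∧ S.Run q0 s q}

/-- Reachability via a nonempty event sequence. -/
def ReachPlus (S : LFSA Q E A) (q q' : Q) : Prop := ∃ s : List E, s ≠ [] ∧ S.Run q s q'

/-- There is a transition cycle reachable from `q` (a cycle at `q` itself counts). -/
def CycleReachableFrom (S : LFSA Q E A) (q : Q) : Prop :=
  ∃ p : Q, (p = q ∨ S.ReachPlus q p) ∧ ∃ s : List E, s ≠ [] ∧ S.Run p s p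

/-- `*`-strong detectability. -/
def StarSD (S : LFSA Q E A) : Prop :=
  ∃ k : ℕ, 0 < k ∧ ∀ s ∈ S.L, ∀ σ : List A, σ <+: S.out s → k < σ.length →
    ∃ q : Q, S.M σ = {q}

/-- ω-strong detectability. -/
def OmegaSD (S : LFSA Q E A) : Prop :=
  ∃ k : ℕ, 0 < k ∧ ∀ (s : ℕ → E) (ρ : ℕ → Q), ρ 0 ∈ S.Q0 →
    (∀ n : ℕ, S.δ (ρ n) (s n) (ρ (n + 1))) →
    ∀ (n : ℕ) (σ : List A), σ <+: S.out (List.ofFn (fun i : Fin n => s i)) →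
      k < σ.length → ∃ q : Q, S.M σ = {q}

/-- Concurrent composition: observable transitions with equal labels synchronize,
unobservable transitions interleave. Events are pairs over `Option E` (`none` = ε). -/
def CC (S1 : LFSA Q1 E A) (S2 : LFSA Q2 E A) :
    LFSA (Q1 × Q2) (Option E × Option E) A where
  δ p ev p' :=
    match ev with
    | (some e, some e') =>
        (∃ a : A, S1.lab e = some a ∧ S2.lab e' = some a) ∧
          S1.δ p.1 e p'.1 ∧ S2.δ p.2 e' p'.2
    | (some e, none) => S1.lab e = none ∧ S1.δ p.1 e p'.1 ∧ p.2 = p'.2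
    | (none, some e') => S2.lab e' = none ∧ p.1 = p'.1 ∧ S2.δ p.2 e' p'.2
    | (none, none) => False
  Q0 := {p | p.1 ∈ S1.Q0 ∧ p.2 ∈ S2.Q0}
  lab ev := ev.1.bind S1.lab

/-- Left projection of an event sequence of a concurrent composition. -/
def lproj (s : List (Option E × Option E)) : List E := s.filterMap Prod.fst

/-- Right projection of an event sequence of a concurrent composition. -/
def rproj (s : List (Option E × Option E)) : List E := s.filterMap Prod.snd

/-- Unobservable reach of a set of states. -/
def UR (S : LFSA Q E A) (X : Set Q) : Set Q :=
  {q | ∃ q0 ∈ X, ∃ s : List E, S.out s = [] ∧ S.Run q0 s q}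

/-- One step of the observer (powerset construction). -/
def obsStep (S : LFSA Q E A) (x : Set Q) (a : A) : Set Q :=
  {q' | ∃ q ∈ x, ∃ (e : E) (p : Q), S.lab e = some a ∧ S.δ q e p ∧ q' ∈ S.UR {p}}

/-- Observer run (deterministic). -/
def obsRun (S : LFSA Q E A) (x : Set Q) (σ : List A) : Set Q := σ.foldl S.obsStep x

/-- The concurrent composition `CC(S_ε, Obs^ε)` of `S` (with events relabeled by their
labels) and a deterministic observer with step function `ostep` and initial state `x0`:
observable transitions move both components, unobservable ones move only the left one. -/
def CCObs (S : LFSA Q E A) (ostep : Set Q → A → Set Q) (x0 : Set Q) :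
    LFSA (Q × Set Q) E A where
  δ p e p' := S.δ p.1 e p'.1 ∧
    (∀ a : A, S.lab e = some a → p'.2 = ostep p.2 a) ∧
    (S.lab e = none → p'.2 = p.2)
  Q0 := {p | p.1 ∈ S.Q0 ∧ p.2 = x0}
  lab := S.lab

/-- A state is reachable if it is an initial state or reachable from one. -/
def Reachable (S : LFSA Q E A) (q : Q) : Prop := ∃ q0 ∈ S.Q0, ∃ s : List E, S.Run q0 s q

/-- Restriction of an automaton to a set of allowed states. -/
def restrict (S : LFSA Q E A) (P : Set Q) : LFSA Q E A where
  δ q e q' := S.δ q e q' ∧ q ∈ P ∧ q' ∈ P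
  Q0 := S.Q0 ∩ P
  lab := S.lab

/-- A run all of whose states (including endpoints) lie in `P`. -/
inductive RunIn (S : LFSA Q E A) (P : Set Q) : Q → List E → Q → Prop
  | nil (q : Q) : q ∈ P → RunIn S P q [] q
  | cons {q q' q'' : Q} {e : E} {s : List E} :
      q ∈ P → S.δ q e q' → RunIn S P q' s q'' → RunIn S P q (e :: s) q''

/-- Normal subautomaton: all faulty transitions removed. -/
def Sn (S : LFSA Q E A) (Ef : Set E) : LFSA Q E A where
  δ q e q' := S.δ q e q' ∧ e ∉ Ef
  Q0 := S.Q0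
  lab := S.lab

/-- Faulty subautomaton: faulty transitions together with all their
predecessor and successor transitions. -/
def Sf (S : LFSA Q E A) (Ef : Set E) : LFSA Q E A where
  δ q e q' := S.δ q e q' ∧ ∃ c f d, f ∈ Ef ∧ S.δ c f d ∧
      ((q = c ∧ e = f ∧ q' = d) ∨ (c = q' ∨ S.ReachPlus q' c) ∨ (q = d ∨ S.ReachPlus d q))
  Q0 := S.Q0
  lab := S.lab

/-- `s` ends with a faulty event. -/
def EndsFaulty (Ef : Set E) (s : List E) : Prop := ∃ (t : List E) (e : E), e ∈ Ef ∧ s = t ++ [e]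

/-- `E_f`-diagnosability. -/
def Diag (S : LFSA Q E A) (Ef : Set E) : Prop :=
  ∃ k : ℕ, ∀ s ∈ S.L, EndsFaulty Ef s → ∀ s' : List E, s ++ s' ∈ S.L → k < s'.length →
    ∀ s'' ∈ S.L, S.out s'' = S.out (s ++ s') → ∃ e ∈ Ef, e ∈ s''

/-- `E_f`-predictability. -/
def Pred (S : LFSA Q E A) (Ef : Set E) : Prop :=
  ∃ k : ℕ, ∀ s ∈ S.L, EndsFaulty Ef s →
    ∃ s' : List E, s' <+: s ∧ (∀ e ∈ s', e ∉ Ef) ∧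
      ∀ u v : List E, u ++ v ∈ S.L → S.out s' = S.out u → (∀ e ∈ u, e ∉ Ef) →
        k < v.length → ∃ e ∈ Ef, e ∈ v

/-- Current-state opacity. -/
def CSO (S : LFSA Q E A) (QS : Set Q) : Prop :=
  ∀ q0 ∈ S.Q0, ∀ (s : List E) (q : Q), S.Run q0 s q → q ∈ QS →
    ∃ q0' ∈ S.Q0, ∃ (s' : List E) (q' : Q), S.Run q0' s' q' ∧ q' ∉ QS ∧ S.out s = S.out s'

/-- Initial-state opacity. -/
def ISO (S : LFSA Q E A) (QS : Set Q) : Prop :=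
  ∀ q0 ∈ S.Q0 ∩ QS, ∀ (s : List E) (q : Q), S.Run q0 s q →
    ∃ q0' ∈ S.Q0 \ QS, ∃ (s' : List E) (q' : Q), S.Run q0' s' q' ∧ S.out s = S.out s'

/-- Infinite-step opacity. -/
def InfSO (S : LFSA Q E A) (QS : Set Q) : Prop :=
  ∀ q0 ∈ S.Q0, ∀ (s1 : List E) (q1 : Q) (s2 : List E) (q2 : Q),
    S.Run q0 s1 q1 → S.Run q1 s2 q2 → q1 ∈ QS →
    ∃ q0' ∈ S.Q0, ∃ (s1' : List E) (q1' : Q) (s2' : List E) (q2' : Q),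
      S.Run q0' s1' q1' ∧ S.Run q1' s2' q2' ∧ q1' ∉ QS ∧
        S.out s1 = S.out s1' ∧ S.out s2 = S.out s2'

/-- `K`-step opacity. -/
def KSO (S : LFSA Q E A) (QS : Set Q) (K : ℕ) : Prop :=
  ∀ q0 ∈ S.Q0, ∀ (s1 : List E) (q1 : Q) (s2 : List E) (q2 : Q),
    S.Run q0 s1 q1 → S.Run q1 s2 q2 → q1 ∈ QS → (S.out s2).length ≤ K →
    ∃ q0' ∈ S.Q0, ∃ (s1' : List E) (q1' : Q) (s2' : List E) (q2' : Q),
      S.Run q0' s1' q1' ∧ S.Run q1' s2' q2' ∧ q1' ∉ QS ∧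
        S.out s1 = S.out s1' ∧ S.out s2 = S.out s2'

/-- Strong current-state opacity: the matching run is entirely non-secret. -/
def SCSO (S : LFSA Q E A) (QS : Set Q) : Prop :=
  ∀ q0 ∈ S.Q0, ∀ (s : List E) (q : Q), S.Run q0 s q → q ∈ QS →
    ∃ q0' ∈ S.Q0, ∃ (s' : List E) (q' : Q), S.RunIn QSᶜ q0' s' q' ∧ S.out s = S.out s'

/-- Strong initial-state opacity. -/
def SISO (S : LFSA Q E A) (QS : Set Q) : Prop :=
  ∀ q0 ∈ S.Q0 ∩ QS, ∀ (s : List E) (q : Q), S.Run q0 s q →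
    ∃ q0' ∈ S.Q0 \ QS, ∃ (s' : List E) (q' : Q), S.RunIn QSᶜ q0' s' q' ∧ S.out s = S.out s'

/-- Strong infinite-step opacity. -/
def SInfSO (S : LFSA Q E A) (QS : Set Q) : Prop :=
  ∀ q0 ∈ S.Q0, ∀ (s1 : List E) (q1 : Q) (s2 : List E) (q2 : Q),
    S.Run q0 s1 q1 → S.Run q1 s2 q2 → q1 ∈ QS →
    ∃ q0' ∈ S.Q0, ∃ (s1' : List E) (q1' : Q) (s2' : List E) (q2' : Q),
      S.RunIn QSᶜ q0' s1' q1' ∧ S.RunIn QSᶜ q1' s2' q2' ∧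
        S.out s1 = S.out s1' ∧ S.out s2 = S.out s2'

/-- Strong `K`-step opacity. -/
def SKSO (S : LFSA Q E A) (QS : Set Q) (K : ℕ) : Prop :=
  ∀ q0 ∈ S.Q0, ∀ (s1 : List E) (q1 : Q) (s2 : List E) (q2 : Q),
    S.Run q0 s1 q1 → S.Run q1 s2 q2 → q1 ∈ QS → (S.out s2).length ≤ K →
    ∃ q0' ∈ S.Q0, ∃ (s1' : List E) (q1' : Q) (s2' : List E) (q2' : Q),
      S.RunIn QSᶜ q0' s1' q1' ∧ S.RunIn QSᶜ q1' s2' q2' ∧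
        S.out s1 = S.out s1' ∧ S.out s2 = S.out s2'

/-- Observer step of the secret-deleted subautomaton `S_dss`. -/
def dssObsStep (S : LFSA Q E A) (QS : Set Q) : Set Q → A → Set Q :=
  (S.restrict QSᶜ).obsStep

/-- Initial observer state of the secret-deleted subautomaton. -/
def dssInit (S : LFSA Q E A) (QS : Set Q) : Set Q :=
  (S.restrict QSᶜ).UR (S.restrict QSᶜ).Q0

end LFSA

/-! The right component of a state of `CC(S_ε, S_dss_obs^ε)` reached along a run with output `σ`
is the current-state estimate of `S_dss` after `σ`: the set of ends of non-secret runs from an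
initial state with output `σ`. So (ii) says that every output of `S` is also produced by a
non-secret run. This is strong infinite-step opacity: a non-secret run with the output of
`s₁ s₂` can be cut where its output is that of `s₁`, and conversely a run through a secret state
is matched by gluing the two non-secret runs that opacity provides. For (i) ⇒ (ii), a run either
avoids `Q_S`, and then its end lies in its own estimate, or passes through a secret state, and
then the reached state lies downstream of a reachable state with secret left component. -/

namespace LFSA

variable {Q E A : Type*} {S : LFSA Q E A} {P : Set Q} {q q' q'' : Q} {s t : List E}

theorem out_append (s t : List E) : S.out (s ++ t) = S.out s ++ S.out t :=
  List.filterMap_append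

theorem Run.append (h : S.Run q s q') (h' : S.Run q' t q'') : S.Run q (s ++ t) q'' := by
  induction h with
  | nil => exact h'
  | cons hδ _ ih => exact .cons hδ (ih h')

theorem run_append_iff : S.Run q (s ++ t) q'' ↔ ∃ q', S.Run q s q' ∧ S.Run q' t q'' := by
  refine ⟨fun h => ?_, fun ⟨_, h, h'⟩ => h.append h'⟩
  induction s generalizing q with
  | nil => exact ⟨q, .nil q, h⟩
  | cons e s ih =>
    obtain _ | ⟨hδ, hr⟩ := h
    obtain ⟨q', h₁, h₂⟩ := ih hr
    exact ⟨q', .cons hδ h₁, h₂⟩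

theorem Run.exists_split_out {σ τ : List A} (h : S.Run q s q'') (hs : S.out s = σ ++ τ) :
    ∃ q' u v, S.Run q u q' ∧ S.Run q' v q'' ∧ S.out u = σ ∧ S.out v = τ := by
  obtain ⟨u, v, rfl, hu, hv⟩ := List.filterMap_eq_append_iff.1 hs
  obtain ⟨q', h₁, h₂⟩ := run_append_iff.1 h
  exact ⟨q', u, v, h₁, h₂, hu, hv⟩

theorem Reachable.run (hq : S.Reachable q) (h : S.Run q s q') : S.Reachable q' :=
  let ⟨q₀, hq₀, t, ht⟩ := hq
  ⟨q₀, hq₀, t ++ s, ht.append h⟩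

theorem Run.runIn_compl_or_exists_mem (QS : Set Q) (h : S.Run q s q') :
    S.RunIn QSᶜ q s q' ∨
      ∃ q₁ ∈ QS, ∃ s₁ s₂, s = s₁ ++ s₂ ∧ S.Run q s₁ q₁ ∧ S.Run q₁ s₂ q' := by
  induction h with
  | nil q =>
    by_cases hq : q ∈ QS
    · exact .inr ⟨q, hq, [], [], rfl, .nil q, .nil q⟩
    · exact .inl (.nil q hq)
  | @cons q _ _ e s hδ hr ih =>
    by_cases hq : q ∈ QS
    · exact .inr ⟨q, hq, [], e :: s, rfl, .nil q, .cons hδ hr⟩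
    · rcases ih with h | ⟨q₁, hq₁, s₁, s₂, rfl, h₁, h₂⟩
      · exact .inl (.cons hq hδ h)
      · exact .inr ⟨q₁, hq₁, e :: s₁, s₂, rfl, .cons hδ h₁, h₂⟩

theorem Run.mem_of_restrict (h : (S.restrict P).Run q s q') (hq : q ∈ P) : q' ∈ P := by
  induction h with
  | nil => exact hq
  | cons hδ _ ih => exact ih hδ.2.2

theorem runIn_iff : S.RunIn P q s q' ↔ q ∈ P ∧ (S.restrict P).Run q s q' := by
  constructor
  · intro h
    induction h with
    | nil q hq => exact ⟨hq, .nil q⟩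
    | cons hq hδ _ ih => exact ⟨hq, .cons ⟨hδ, hq, ih.1⟩ ih.2⟩
  · rintro ⟨hq, h⟩
    induction h with
    | nil q => exact .nil q hq
    | cons hδ _ ih => exact .cons hq hδ.1 (ih hδ.2.2)

theorem RunIn.append (h : S.RunIn P q s q') (h' : S.RunIn P q' t q'') :
    S.RunIn P q (s ++ t) q'' :=
  runIn_iff.2 ⟨(runIn_iff.1 h).1, (runIn_iff.1 h).2.append (runIn_iff.1 h').2⟩

theorem RunIn.exists_split_out {σ τ : List A} (h : S.RunIn P q s q'') (hs : S.out s = σ ++ τ) :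
    ∃ q' u v, S.RunIn P q u q' ∧ S.RunIn P q' v q'' ∧ S.out u = σ ∧ S.out v = τ := by
  obtain ⟨hq, hr⟩ := runIn_iff.1 h
  obtain ⟨q', u, v, hu, hv, rfl, rfl⟩ := hr.exists_split_out hs
  exact ⟨q', u, v, runIn_iff.2 ⟨hq, hu⟩, runIn_iff.2 ⟨hu.mem_of_restrict hq, hv⟩, rfl, rfl⟩

variable (S) in
/-- `UR x = obsReach x []` and `M σ = obsReach Q0 σ` hold by `rfl`. -/
def obsReach (x : Set Q) (σ : List A) : Set Q :=
  {q' | ∃ q ∈ x, ∃ s : List E, S.out s = σ ∧ S.Run q s q'}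

theorem obsReach_obsReach (x : Set Q) (σ τ : List A) :
    S.obsReach (S.obsReach x σ) τ = S.obsReach x (σ ++ τ) := by
  ext q''
  constructor
  · rintro ⟨q', ⟨q, hq, s, rfl, hs⟩, t, rfl, ht⟩
    exact ⟨q, hq, s ++ t, out_append s t, hs.append ht⟩
  · rintro ⟨q, hq, s, hout, hs⟩
    obtain ⟨q', u, v, hu, hv, rfl, rfl⟩ := hs.exists_split_out hout
    exact ⟨q', ⟨q, hq, u, rfl, hu⟩, v, rfl, hv⟩

theorem obsStep_eq_obsReach {x : Set Q} (hx : S.obsReach x [] ⊆ x) (a : A) :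
    S.obsStep x a = S.obsReach x [a] := by
  ext q'
  constructor
  · rintro ⟨q, hq, e, p, he, hδ, _, rfl, s, hs, hr⟩
    exact ⟨q, hq, e :: s, by rw [out, List.filterMap_cons_some he]; exact congrArg _ hs,
      .cons hδ hr⟩
  · rintro ⟨q, hq, s, hout, hr⟩
    obtain ⟨u, e, v, rfl, hu, he, hv⟩ := List.filterMap_eq_cons_iff.1 hout
    obtain ⟨m, hum, _ | ⟨hδ, hv'⟩⟩ := run_append_iff.1 hr
    exact ⟨m, hx ⟨q, hq, u, List.filterMap_eq_nil_iff.2 hu, hum⟩, e, _, he, hδ, _, rfl, v, hv, hv'⟩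

theorem obsRun_obsReach_nil (x : Set Q) (σ : List A) :
    S.obsRun (S.obsReach x []) σ = S.obsReach x σ := by
  induction σ generalizing x with
  | nil => rfl
  | cons a σ ih =>
    have hclosed : S.obsReach (S.obsReach x []) [] ⊆ S.obsReach x [] :=
      (obsReach_obsReach x [] []).subset
    calc S.obsRun (S.obsReach x []) (a :: σ)
        = S.obsRun (S.obsReach (S.obsReach x []) [a]) σ := by
          rw [← obsStep_eq_obsReach hclosed]; rfl
      _ = S.obsRun (S.obsReach (S.obsReach x [a]) []) σ := by
          rw [obsReach_obsReach, obsReach_obsReach]; rfl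
      _ = S.obsReach x (a :: σ) := by
          rw [ih, obsReach_obsReach]; rfl

theorem obsRun_UR_Q0 (σ : List A) : S.obsRun (S.UR S.Q0) σ = S.M σ :=
  obsRun_obsReach_nil S.Q0 σ

theorem mem_M_restrict_iff {σ : List A} :
    q ∈ (S.restrict P).M σ ↔ ∃ q₀ ∈ S.Q0, ∃ s, S.out s = σ ∧ S.RunIn P q₀ s q := by
  constructor
  · rintro ⟨q₀, ⟨hq₀, hq₀P⟩, s, hout, hr⟩
    exact ⟨q₀, hq₀, s, hout, runIn_iff.2 ⟨hq₀P, hr⟩⟩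
  · rintro ⟨q₀, hq₀, s, hout, hr⟩
    exact ⟨q₀, ⟨hq₀, (runIn_iff.1 hr).1⟩, s, hout, (runIn_iff.1 hr).2⟩

section CCObs

variable {ostep : Set Q → A → Set Q} {x₀ : Set Q} {p p' : Q × Set Q}

theorem ccObs_δ_iff {e : E} :
    (S.CCObs ostep x₀).δ p e p' ↔ S.δ p.1 e p'.1 ∧ p'.2 = (S.out [e]).foldl ostep p.2 := by
  cases he : S.lab e <;> simp [CCObs, out, he]

theorem Run.ccObs (h : S.Run q s q') (x : Set Q) :
    (S.CCObs ostep x₀).Run (q, x) s (q', (S.out s).foldl ostep x) := by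
  induction h generalizing x with
  | nil q => exact .nil _
  | @cons _ _ _ e s hδ _ ih =>
    rw [← List.singleton_append, out_append, List.foldl_append]
    exact .cons (ccObs_δ_iff.2 ⟨hδ, rfl⟩) (ih _)

theorem Run.of_ccObs (h : (S.CCObs ostep x₀).Run p s p') :
    S.Run p.1 s p'.1 ∧ p'.2 = (S.out s).foldl ostep p.2 := by
  induction h with
  | nil => exact ⟨.nil _, rfl⟩
  | @cons _ _ _ e s hδ _ ih =>
    obtain ⟨hδ₁, hx⟩ := ccObs_δ_iff.1 hδ
    refine ⟨.cons hδ₁ ih.1, ?_⟩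
    rw [← List.singleton_append, out_append, List.foldl_append, ← hx]
    exact ih.2

theorem run_ccObs_iff :
    (S.CCObs ostep x₀).Run p s p' ↔ S.Run p.1 s p'.1 ∧ p'.2 = (S.out s).foldl ostep p.2 := by
  refine ⟨Run.of_ccObs, fun ⟨h, hx⟩ => ?_⟩
  obtain ⟨q', x'⟩ := p'
  subst hx
  exact h.ccObs p.2

theorem reachable_ccObs_iff :
    (S.CCObs ostep x₀).Reachable p ↔
      ∃ q₀ ∈ S.Q0, ∃ s, S.Run q₀ s p.1 ∧ p.2 = (S.out s).foldl ostep x₀ := by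
  constructor
  · rintro ⟨⟨q₀, x⟩, ⟨hq₀, rfl⟩, s, h⟩
    exact ⟨q₀, hq₀, s, run_ccObs_iff.1 h⟩
  · rintro ⟨q₀, hq₀, s, h⟩
    exact ⟨(q₀, x₀), ⟨hq₀, rfl⟩, s, run_ccObs_iff.2 h⟩

end CCObs

section Opacity

variable {QS : Set Q} {p : Q × Set Q}

theorem foldl_dssObsStep_dssInit (σ : List A) :
    σ.foldl (S.dssObsStep QS) (S.dssInit QS) = (S.restrict QSᶜ).M σ :=
  obsRun_UR_Q0 σ

theorem reachable_dssCC_iff :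
    (S.CCObs (S.dssObsStep QS) (S.dssInit QS)).Reachable p ↔
      ∃ q₀ ∈ S.Q0, ∃ s, S.Run q₀ s p.1 ∧ p.2 = (S.restrict QSᶜ).M (S.out s) := by
  simp only [reachable_ccObs_iff, foldl_dssObsStep_dssInit]

theorem mem_or_exists_secret_of_reachable_dssCC
    (hp : (S.CCObs (S.dssObsStep QS) (S.dssInit QS)).Reachable p) :
    p.1 ∈ p.2 ∨ ∃ p₁ : Q × Set Q, (S.CCObs (S.dssObsStep QS) (S.dssInit QS)).Reachable p₁ ∧
      p₁.1 ∈ QS ∧ ∃ s, (S.CCObs (S.dssObsStep QS) (S.dssInit QS)).Run p₁ s p := by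
  obtain ⟨q₀, hq₀, s, hs, hx⟩ := reachable_dssCC_iff.1 hp
  rcases hs.runIn_compl_or_exists_mem QS with hns | ⟨q₁, hq₁, s₁, s₂, rfl, h₁, h₂⟩
  · exact .inl (hx ▸ mem_M_restrict_iff.2 ⟨q₀, hq₀, s, rfl, hns⟩)
  · refine .inr ⟨(q₁, (S.restrict QSᶜ).M (S.out s₁)),
      reachable_dssCC_iff.2 ⟨q₀, hq₀, s₁, h₁, rfl⟩, hq₁, s₂, run_ccObs_iff.2 ⟨h₂, ?_⟩⟩
    rw [hx, ← foldl_dssObsStep_dssInit, ← foldl_dssObsStep_dssInit, out_append,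
      List.foldl_append]

theorem forall_reachable_dssCC_nonempty_iff :
    (∀ p : Q × Set Q, (S.CCObs (S.dssObsStep QS) (S.dssInit QS)).Reachable p → p.2.Nonempty) ↔
      ∀ q₀ ∈ S.Q0, ∀ s q, S.Run q₀ s q → ((S.restrict QSᶜ).M (S.out s)).Nonempty := by
  constructor
  · intro h q₀ hq₀ s q hs
    exact h (q, _) (reachable_dssCC_iff.2 ⟨q₀, hq₀, s, hs, rfl⟩)
  · intro h p hp
    obtain ⟨q₀, hq₀, s, hs, hx⟩ := reachable_dssCC_iff.1 hp
    exact hx ▸ h q₀ hq₀ s p.1 hs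

theorem sInfSO_iff :
    S.SInfSO QS ↔ ∀ q₀ ∈ S.Q0, ∀ s q, S.Run q₀ s q → ((S.restrict QSᶜ).M (S.out s)).Nonempty := by
  constructor
  · intro h q₀ hq₀ s q hs
    rcases hs.runIn_compl_or_exists_mem QS with hns | ⟨q₁, hq₁, s₁, s₂, rfl, h₁, h₂⟩
    · exact ⟨q, mem_M_restrict_iff.2 ⟨q₀, hq₀, s, rfl, hns⟩⟩
    · obtain ⟨q₀', hq₀', s₁', q₁', s₂', q₂', h₁', h₂', ho₁, ho₂⟩ := h q₀ hq₀ s₁ q₁ s₂ q h₁ h₂ hq₁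
      exact ⟨q₂', mem_M_restrict_iff.2 ⟨q₀', hq₀', s₁' ++ s₂',
        by rw [out_append, out_append, ho₁, ho₂], h₁'.append h₂'⟩⟩
  · intro h q₀ hq₀ s₁ q₁ s₂ q₂ h₁ h₂ _
    obtain ⟨q', hq'⟩ := h q₀ hq₀ (s₁ ++ s₂) q₂ (h₁.append h₂)
    obtain ⟨q₀', hq₀', s', hout, hr⟩ := mem_M_restrict_iff.1 hq'
    obtain ⟨m, u, v, hu, hv, hou, hov⟩ := hr.exists_split_out (hout.trans (out_append s₁ s₂))
    exact ⟨q₀', hq₀', u, m, v, q', hu, hv, hou.symm, hov.symm⟩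

end Opacity

end LFSA

/-- the two conditions (i) and (ii) are equivalent, and strong
infinite-step opacity is characterized by all reachable states of
`CC(S_ε, S_dss_obs^ε)` having nonempty right component. -/
theorem stmt16 {Q E A : Type*} (S : LFSA Q E A) (QS : Set Q)
    (T : LFSA (Q × Set Q) E A)
    (hT : T = S.CCObs (S.dssObsStep QS) (S.dssInit QS)) :
    ((∀ p : Q × Set Q, T.Reachable p → p.1 ∈ QS →
        (p.2.Nonempty ∧ ∀ (s : List E) (p' : Q × Set Q), T.Run p s p' → p'.2.Nonempty)) ↔
      (∀ p : Q × Set Q, T.Reachable p → p.2.Nonempty)) ∧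
    (S.SInfSO QS ↔ ∀ p : Q × Set Q, T.Reachable p → p.2.Nonempty) := by
  subst hT
  refine ⟨⟨fun hi p hp => ?_, fun hii p hp _ => ⟨hii p hp, fun s p' h => hii p' (hp.run h)⟩⟩,
    LFSA.sInfSO_iff.trans LFSA.forall_reachable_dssCC_nonempty_iff.symm⟩
  rcases LFSA.mem_or_exists_secret_of_reachable_dssCC hp with hmem | ⟨p₁, hp₁, hq₁, s, hs⟩
  · exact ⟨p.1, hmem⟩
  · exact (hi p₁ hp₁ hq₁).2 s p hs
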